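/- Let V₁ and V₂ be finite-dimensional real inner product spaces and V = V₁ ⊕ V₂ their orthogonal direct sum. For x, y ∈ V define x∧y ∈ so(V) by (x∧y)(z) := ⟨x,z⟩y − ⟨y,z⟩x, and equip so(V) with the inner product ⟨A,B⟩ := tr(AᵀB). For a ∈ so(V₁) ⊆ so(V) and b ∈ so(V₂) ⊆ so(V) (extended by zero on the other summand), define the alternating bilinear map a∨b : V × V → so(V) by (a∨b)(X,Y) := ⟨a, X∧Y⟩·b + ⟨b, X∧Y⟩·a. Then the first Bianchi map b₁ is injective on the linear span of {a∨b : a ∈ so(V₁), b ∈ so(V₂)}: the only element R of this span with b₁R = 0 is R = 0. -/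
import Mathlib


open scoped RealInnerProductSpace

noncomputable section

/-- The elementary skew endomorphism `x ∧ y : z ↦ ⟨x,z⟩y − ⟨y,z⟩x`. -/
def wedgeEnd {V : Type*} [NormedAddCommGroup V] [InnerProductSpace ℝ V]
    [FiniteDimensional ℝ V] (x y : V) : Module.End ℝ V :=
  ((innerSL ℝ x).toLinearMap).smulRight y - ((innerSL ℝ y).toLinearMap).smulRight x

/-- The trace inner product `⟨A,B⟩ = tr(AᵀB)` on endomorphisms. -/
def endInner {V : Type*} [NormedAddCommGroup V] [InnerProductSpace ℝ V]
    [FiniteDimensional ℝ V] (A B : Module.End ℝ V) : ℝ :=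
  LinearMap.trace ℝ V (LinearMap.adjoint A ∘ₗ B)

/-- The symmetrised product `a ∨ b` as an (automatically bilinear) map
`V × V → End V`, `(a ∨ b)(X,Y) = ⟨a, X∧Y⟩·b + ⟨b, X∧Y⟩·a`. -/
def veeProd {V : Type*} [NormedAddCommGroup V] [InnerProductSpace ℝ V]
    [FiniteDimensional ℝ V] (a b : Module.End ℝ V) : V → V → Module.End ℝ V :=
  fun X Y => endInner a (wedgeEnd X Y) • b + endInner b (wedgeEnd X Y) • a

section Aux

variable {V : Type*} [NormedAddCommGroup V] [InnerProductSpace ℝ V] [FiniteDimensional ℝ V]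

lemma aux_trace_smulRight (f : Module.Dual ℝ V) (v : V) :
    LinearMap.trace ℝ V (f.smulRight v) = f v := by
  rw [show f.smulRight v = dualTensorHom ℝ V V (f ⊗ₜ v) by ext z; simp,
    LinearMap.trace_eq_contract_apply]
  simp

lemma aux_endInner_wedge (A : Module.End ℝ V) (x y : V) :
    endInner A (wedgeEnd x y) = ⟪A x, y⟫ - ⟪x, A y⟫ := by
  have h : LinearMap.adjoint A ∘ₗ wedgeEnd x y =
      ((innerSL ℝ x).toLinearMap).smulRight (LinearMap.adjoint A y)
        - ((innerSL ℝ y).toLinearMap).smulRight (LinearMap.adjoint A x) := by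
    ext z; simp [wedgeEnd]
  rw [endInner, h, map_sub, aux_trace_smulRight, aux_trace_smulRight]
  simp [LinearMap.adjoint_inner_right, real_inner_comm]

lemma aux_veeProd_eq (a b : Module.End ℝ V) (x y : V) :
    veeProd a b x y = (⟪a x, y⟫ - ⟪x, a y⟫) • b + (⟪b x, y⟫ - ⟪x, b y⟫) • a := by
  simp only [veeProd, aux_endInner_wedge]

/-- The invariant predicate on curvature-like maps. -/
def auxQ (V₁ : Submodule ℝ V) (R : V → V → Module.End ℝ V) : Prop :=
  (∀ x x' y, R (x + x') y = R x y + R x' y) ∧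
  (∀ x y y', R x (y + y') = R x y + R x y') ∧
  (∀ x ∈ V₁, ∀ y ∈ V₁ᗮ, R x y = 0) ∧
  (∀ x ∈ V₁, ∀ y ∈ V₁ᗮ, R y x = 0) ∧
  (∀ x ∈ V₁, ∀ y ∈ V₁, ∀ z ∈ V₁, R x y z = 0) ∧
  (∀ x ∈ V₁ᗮ, ∀ y ∈ V₁ᗮ, ∀ z ∈ V₁ᗮ, R x y z = 0)

end Aux

/-- On the span of the products `a ∨ b` with `a ∈ so(V₁)` and `b ∈ so(V₁ᗮ)`
(extended by zero), the first Bianchi map `b₁` is injective. -/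
theorem bianchi_injective_on_mixed_products
    {V : Type*} [NormedAddCommGroup V] [InnerProductSpace ℝ V] [FiniteDimensional ℝ V]
    (V₁ : Submodule ℝ V) :
    ∀ R : V → V → Module.End ℝ V,
      R ∈ Submodule.span ℝ {S : V → V → Module.End ℝ V |
        ∃ a b : Module.End ℝ V,
          (∀ x y : V, ⟪a x, y⟫ = -⟪x, a y⟫) ∧ (∀ x ∈ V₁, a x ∈ V₁) ∧
            (∀ x ∈ V₁ᗮ, a x = 0) ∧
          (∀ x y : V, ⟪b x, y⟫ = -⟪x, b y⟫) ∧ (∀ x ∈ V₁ᗮ, b x ∈ V₁ᗮ) ∧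
            (∀ x ∈ V₁, b x = 0) ∧
          S = veeProd a b} →
      (∀ X Y Z : V, R X Y Z + R Y Z X + R Z X Y = 0) → R = 0 := by
  intro R hR hB
  -- Step 1: the invariant predicate holds on the span.
  have hQ : auxQ V₁ R := by
    clear hB
    induction hR using Submodule.span_induction with
    | mem S hS =>
      obtain ⟨a, b, ha_skew, haV, haO, hb_skew, hbO, hbV, rfl⟩ := hS
      refine ⟨?_, ?_, ?_, ?_, ?_, ?_⟩
      · intro x x' y
        simp only [aux_veeProd_eq, inner_add_left, inner_add_right, map_add]
        module
      · intro x y y'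
        simp only [aux_veeProd_eq, inner_add_left, inner_add_right, map_add]
        module
      · intro x hx y hy
        have h1 : ⟪a x, y⟫ = 0 := (Submodule.mem_orthogonal V₁ y).mp hy _ (haV x hx)
        have h2 : a y = 0 := haO y hy
        have h3 : b x = 0 := hbV x hx
        have h4 : ⟪x, b y⟫ = 0 := (Submodule.mem_orthogonal V₁ (b y)).mp (hbO y hy) x hx
        simp [aux_veeProd_eq, h1, h2, h3, h4]
      · intro x hx y hy
        have h2 : a y = 0 := haO y hy
        have h1 : ⟪y, a x⟫ = 0 := by
          rw [real_inner_comm]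
          exact (Submodule.mem_orthogonal V₁ y).mp hy _ (haV x hx)
        have h3 : b y ∈ V₁ᗮ := hbO y hy
        have h4 : ⟪b y, x⟫ = 0 := by
          rw [real_inner_comm]
          exact (Submodule.mem_orthogonal V₁ (b y)).mp h3 x hx
        have h5 : b x = 0 := hbV x hx
        simp [aux_veeProd_eq, h1, h2, h4, h5]
      · intro x hx y hy z hz
        have h1 : b x = 0 := hbV x hx
        have h2 : b y = 0 := hbV y hy
        have h3 : b z = 0 := hbV z hz
        simp [aux_veeProd_eq, h1, h2, h3]
      · intro x hx y hy z hz
        have h1 : a x = 0 := haO x hx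
        have h2 : a y = 0 := haO y hy
        have h3 : a z = 0 := haO z hz
        simp [aux_veeProd_eq, h1, h2, h3]
    | zero => exact ⟨by simp, by simp, by simp, by simp, by simp, by simp⟩
    | add S T hS hT hQS hQT =>
      obtain ⟨s1, s2, s3, s4, s5, s6⟩ := hQS
      obtain ⟨t1, t2, t3, t4, t5, t6⟩ := hQT
      refine ⟨fun x x' y => ?_, fun x y y' => ?_, fun x hx y hy => ?_,
        fun x hx y hy => ?_, fun x hx y hy z hz => ?_, fun x hx y hy z hz => ?_⟩
      · simp only [Pi.add_apply, s1, t1]; abel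
      · simp only [Pi.add_apply, s2, t2]; abel
      · simp [Pi.add_apply, s3 x hx y hy, t3 x hx y hy]
      · simp [Pi.add_apply, s4 x hx y hy, t4 x hx y hy]
      · simp [Pi.add_apply, s5 x hx y hy z hz, t5 x hx y hy z hz]
      · simp [Pi.add_apply, s6 x hx y hy z hz, t6 x hx y hy z hz]
    | smul c S hS hQS =>
      obtain ⟨s1, s2, s3, s4, s5, s6⟩ := hQS
      refine ⟨fun x x' y => ?_, fun x y y' => ?_, fun x hx y hy => ?_,
        fun x hx y hy => ?_, fun x hx y hy z hz => ?_, fun x hx y hy z hz => ?_⟩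
      · simp only [Pi.smul_apply, s1, smul_add]
      · simp only [Pi.smul_apply, s2, smul_add]
      · simp [Pi.smul_apply, s3 x hx y hy]
      · simp [Pi.smul_apply, s4 x hx y hy]
      · simp [Pi.smul_apply, s5 x hx y hy z hz]
      · simp [Pi.smul_apply, s6 x hx y hy z hz]
  obtain ⟨hadd1, hadd2, hmix, hmix', hdiag1, hdiag2⟩ := hQ
  -- Step 2: use Bianchi to kill the diagonal blocks completely.
  have hV1 : ∀ x ∈ V₁, ∀ y ∈ V₁, R x y = 0 := by
    intro x hx y hy
    ext z
    obtain ⟨z₁, hz₁, z₂, hz₂, rfl⟩ := V₁.exists_add_mem_mem_orthogonal z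
    have h1 : R x y z₁ = 0 := hdiag1 x hx y hy z₁ hz₁
    have h2 : R x y z₂ = 0 := by
      have := hB x y z₂
      rw [hmix y hy z₂ hz₂, hmix' x hx z₂ hz₂] at this
      simpa using this
    simp [map_add, h1, h2]
  have hV2 : ∀ x ∈ V₁ᗮ, ∀ y ∈ V₁ᗮ, R x y = 0 := by
    intro x hx y hy
    ext z
    obtain ⟨z₁, hz₁, z₂, hz₂, rfl⟩ := V₁.exists_add_mem_mem_orthogonal z
    have h2 : R x y z₂ = 0 := hdiag2 x hx y hy z₂ hz₂
    have h1 : R x y z₁ = 0 := by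
      have := hB x y z₁
      rw [hmix' z₁ hz₁ y hy, hmix z₁ hz₁ x hx] at this
      simpa using this
    simp [map_add, h1, h2]
  -- Step 3: conclude by bilinearity.
  funext X Y
  obtain ⟨x₁, hx₁, x₂, hx₂, rfl⟩ := V₁.exists_add_mem_mem_orthogonal X
  obtain ⟨y₁, hy₁, y₂, hy₂, rfl⟩ := V₁.exists_add_mem_mem_orthogonal Y
  rw [hadd1, hadd2, hadd2, hV1 x₁ hx₁ y₁ hy₁, hmix x₁ hx₁ y₂ hy₂,
    hmix' y₁ hy₁ x₂ hx₂, hV2 x₂ hx₂ y₂ hy₂]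
  simp

end
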